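/- Let α be a real number with 0 < α < 1 satisfying F(1 − α) = √2 · F(α). Then α = (√2 − 1)². -/

import Mathlib

/-- Ramanujan's hypergeometric series `F(α) = ∑ ((2n choose n)/4ⁿ)² αⁿ`. -/
noncomputable def F (α : ℝ) : ℝ :=
  ∑' n : ℕ, ((Nat.choose (2 * n) n : ℝ) / 4 ^ n) ^ 2 * α ^ n

/-!
Expanding `(1 - m sin²θ)^(-1/2)` by the binomial series and integrating termwise with Wallis'
formula gives `∫₀^{π/2} (1 - m sin²θ)^(-1/2) dθ = (π/2) F(m)`, i.e. `F` is a complete elliptic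
integral `K`. Landen's substitution `sin φ = (1 + k) sin θ / (1 + k sin²θ)` shows
`K(4k/(1+k)²) = (1 + k) K(k²)`; for `k = √2 - 1` one has `4k/(1+k)² = 1 - k²` and `1 + k = √2`,
so `α = k²` solves `F(1 - α) = √2 F(α)`. Since `F` is strictly increasing,
`α ↦ F(1 - α) - √2 F(α)` is strictly decreasing, so this solution is the only one.
-/

open Real Finset
open Nat (centralBinom)

theorem centralBinom_div_four_pow_eq_prod (n : ℕ) :
    (centralBinom n : ℝ) / 4 ^ n = ∏ i ∈ range n, (2 * (i : ℝ) + 1) / (2 * i + 2) := by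
  induction n with
  | zero => simp
  | succ n ih =>
    have h : ((n + 1 : ℕ) : ℝ) * centralBinom (n + 1) = 2 * (2 * n + 1) * centralBinom n := by
      exact_mod_cast Nat.succ_mul_centralBinom_succ n
    rw [prod_range_succ, ← ih, pow_succ]
    push_cast at h
    field_simp
    linear_combination 2 * h

theorem factorial_mul_centralBinom_div_four_pow (n : ℕ) :
    (n.factorial : ℝ) * (centralBinom n / 4 ^ n) = (ascPochhammer ℝ n).eval (1 / 2) := by
  induction n with
  | zero => simp
  | succ n ih =>
    rw [ascPochhammer_succ_eval, ← ih, centralBinom_div_four_pow_eq_prod,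
      centralBinom_div_four_pow_eq_prod, prod_range_succ, Nat.factorial_succ]
    push_cast
    field_simp
    ring

theorem Ring.multichoose_one_half (n : ℕ) :
    Ring.multichoose (1 / 2 : ℝ) n = centralBinom n / 4 ^ n := by
  have h := Ring.factorial_nsmul_multichoose_eq_ascPochhammer (1 / 2 : ℝ) n
  rw [Polynomial.ascPochhammer_smeval_eq_eval, nsmul_eq_mul,
    ← factorial_mul_centralBinom_div_four_pow] at h
  exact mul_left_cancel₀ (by positivity) h

theorem hasSum_centralBinom_div_four_pow_mul_pow {x : ℝ} (hx : |x| < 1) :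
    HasSum (fun n ↦ (centralBinom n : ℝ) / 4 ^ n * x ^ n) (√(1 - x))⁻¹ := by
  have h := (one_div_one_sub_rpow_hasFPowerSeriesOnBall_zero (1 / 2)).hasSum
    (y := x) (by rwa [mem_eball_zero_iff, enorm_eq_ofReal_abs, ENNReal.ofReal_lt_one])
  simp only [FormalMultilinearSeries.ofScalars_apply_eq, smul_eq_mul, zero_add,
    ← Ring.multichoose_eq, Ring.multichoose_one_half] at h
  rwa [sqrt_eq_rpow, inv_eq_one_div]

theorem integral_sin_pow_two_mul_zero_pi_div_two (n : ℕ) :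
    ∫ θ in (0 : ℝ)..π / 2, sin θ ^ (2 * n) = π / 2 * (centralBinom n / 4 ^ n) := by
  have h := intervalIntegral.integral_comp_sub_left (fun θ ↦ sin θ ^ (2 * n)) (π / 2)
    (a := 0) (b := π / 2)
  simp only [sin_pi_div_two_sub, sub_zero, sub_self] at h
  rw [← h, EulerSine.integral_cos_pow_eq, integral_sin_pow_even,
    centralBinom_div_four_pow_eq_prod]
  ring

/-- The complete elliptic integral of the first kind, as a function of the parameter `m = k²`
(not of the modulus `k`). -/
noncomputable def ellipticK (m : ℝ) : ℝ := ∫ θ in (0 : ℝ)..π / 2, (√(1 - m * sin θ ^ 2))⁻¹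

theorem hasSum_ellipticK {m : ℝ} (h0 : 0 ≤ m) (h1 : m < 1) :
    HasSum (fun n ↦ π / 2 * (((centralBinom n : ℝ) / 4 ^ n) ^ 2 * m ^ n)) (ellipticK m) := by
  have hsin (θ : ℝ) : 0 ≤ m * sin θ ^ 2 ∧ m * sin θ ^ 2 ≤ m :=
    ⟨by positivity, mul_le_of_le_one_right h0 (sin_sq_le_one θ)⟩
  have hterm (n : ℕ) : ∫ θ in (0 : ℝ)..π / 2, (centralBinom n : ℝ) / 4 ^ n * (m * sin θ ^ 2) ^ n
      = π / 2 * (((centralBinom n : ℝ) / 4 ^ n) ^ 2 * m ^ n) := by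
    simp_rw [mul_pow, ← pow_mul, ← mul_assoc, intervalIntegral.integral_const_mul,
      integral_sin_pow_two_mul_zero_pi_div_two]
    ring
  simp_rw [← hterm]
  refine intervalIntegral.hasSum_integral_of_dominated_convergence
    (fun n _ ↦ (centralBinom n : ℝ) / 4 ^ n * m ^ n) (fun n ↦ by fun_prop)
    (fun n ↦ .of_forall fun θ _ ↦ ?_)
    (.of_forall fun _ _ ↦
      (hasSum_centralBinom_div_four_pow_mul_pow (by rwa [abs_of_nonneg h0])).summable)
    intervalIntegrable_const
    (.of_forall fun θ _ ↦ hasSum_centralBinom_div_four_pow_mul_pow ?_)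
  · rw [norm_of_nonneg (by positivity)]
    gcongr
    exact (hsin θ).2
  · rw [abs_of_nonneg (hsin θ).1]
    exact (hsin θ).2.trans_lt h1

theorem hasSum_F {m : ℝ} (h0 : 0 ≤ m) (h1 : m < 1) :
    HasSum (fun n ↦ ((centralBinom n : ℝ) / 4 ^ n) ^ 2 * m ^ n) (F m) :=
  ((summable_mul_left_iff (by positivity)).1 (hasSum_ellipticK h0 h1).summable).hasSum

theorem ellipticK_eq_pi_div_two_mul_F {m : ℝ} (h0 : 0 ≤ m) (h1 : m < 1) :
    ellipticK m = π / 2 * F m :=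
  (hasSum_ellipticK h0 h1).unique ((hasSum_F h0 h1).mul_left _)

theorem strictMonoOn_F : StrictMonoOn F (Set.Ico 0 1) := by
  rintro a ⟨ha0, -⟩ b ⟨hb0, hb1⟩ hab
  refine hasSum_lt (fun n ↦ ?_) ?_ (hasSum_F ha0 (hab.trans hb1)) (hasSum_F hb0 hb1) (i := 1)
  · gcongr
  · norm_num [centralBinom]
    exact hab

theorem strictAntiOn_F_one_sub_sub_mul_F {c : ℝ} (hc : 0 ≤ c) :
    StrictAntiOn (fun α ↦ F (1 - α) - c * F α) (Set.Ioo 0 1) := by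
  rintro a ⟨ha0, ha1⟩ b ⟨hb0, hb1⟩ hab
  have hlt : F (1 - b) < F (1 - a) :=
    strictMonoOn_F ⟨by linarith, by linarith⟩ ⟨by linarith, by linarith⟩ (by linarith)
  have hle : c * F a ≤ c * F b :=
    mul_le_mul_of_nonneg_left (strictMonoOn_F.monotoneOn ⟨ha0.le, ha1⟩ ⟨hb0.le, hb1⟩ hab.le) hc
  dsimp only
  linarith

/-- Landen's substitution is `sin φ = landenSin k θ`. -/
noncomputable def landenSin (k θ : ℝ) : ℝ := (1 + k) * sin θ / (1 + k * sin θ ^ 2)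

section Landen

variable {k : ℝ}

theorem one_sub_landenSin_sq (hk0 : 0 ≤ k) (θ : ℝ) :
    1 - landenSin k θ ^ 2 = cos θ ^ 2 * (1 - k ^ 2 * sin θ ^ 2) / (1 + k * sin θ ^ 2) ^ 2 := by
  have : 0 < 1 + k * sin θ ^ 2 := by positivity
  rw [landenSin, cos_sq']
  field_simp
  ring

theorem one_sub_mul_landenSin_sq (hk0 : 0 ≤ k) (θ : ℝ) :
    1 - 4 * k / (1 + k) ^ 2 * landenSin k θ ^ 2
      = ((1 - k * sin θ ^ 2) / (1 + k * sin θ ^ 2)) ^ 2 := by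
  have : 0 < 1 + k * sin θ ^ 2 := by positivity
  have : 0 < 1 + k := by positivity
  rw [landenSin]
  field_simp
  ring

theorem one_sub_sq_mul_sin_sq_pos (hk0 : 0 ≤ k) (hk1 : k < 1) (θ : ℝ) :
    0 < 1 - k ^ 2 * sin θ ^ 2 := by
  nlinarith [sin_sq_le_one θ, mul_nonneg hk0 (sq_nonneg (sin θ))]

theorem landenSin_sq_le_one (hk0 : 0 ≤ k) (hk1 : k < 1) (θ : ℝ) : landenSin k θ ^ 2 ≤ 1 := by
  have := one_sub_sq_mul_sin_sq_pos hk0 hk1 θ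
  have : 0 ≤ 1 - landenSin k θ ^ 2 := by rw [one_sub_landenSin_sq hk0]; positivity
  linarith

theorem landenSin_sq_lt_one (hk0 : 0 ≤ k) (hk1 : k < 1) {θ : ℝ} (hcos : cos θ ≠ 0) :
    landenSin k θ ^ 2 < 1 := by
  have := one_sub_sq_mul_sin_sq_pos hk0 hk1 θ
  have : 0 < 1 - landenSin k θ ^ 2 := by rw [one_sub_landenSin_sq hk0]; positivity
  linarith

theorem hasDerivAt_landenSin (hk0 : 0 ≤ k) (θ : ℝ) :
    HasDerivAt (landenSin k)
      ((1 + k) * cos θ * (1 - k * sin θ ^ 2) / (1 + k * sin θ ^ 2) ^ 2) θ := by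
  have hpos : 0 < 1 + k * sin θ ^ 2 := by positivity
  have hnum := (hasDerivAt_sin θ).const_mul (1 + k)
  have hden := ((hasDerivAt_sin θ).pow 2).const_mul k |>.const_add 1
  refine (hnum.div hden hpos.ne').congr_deriv ?_
  simp only [Pi.pow_apply]
  field_simp
  ring

theorem hasDerivAt_arcsin_landenSin (hk0 : 0 ≤ k) (hk1 : k < 1) {θ : ℝ} (hcos : 0 < cos θ) :
    HasDerivAt (fun θ ↦ arcsin (landenSin k θ))
      ((1 + k) * (1 - k * sin θ ^ 2) / ((1 + k * sin θ ^ 2) * √(1 - k ^ 2 * sin θ ^ 2))) θ := by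
  have hpos : 0 < 1 + k * sin θ ^ 2 := by positivity
  have hroot := sqrt_pos.2 (one_sub_sq_mul_sin_sq_pos hk0 hk1 θ)
  have hu := abs_lt.1 ((sq_lt_one_iff_abs_lt_one _).1 (landenSin_sq_lt_one hk0 hk1 hcos.ne'))
  have hsqrt : √(1 - landenSin k θ ^ 2)
      = cos θ * √(1 - k ^ 2 * sin θ ^ 2) / (1 + k * sin θ ^ 2) := by
    rw [one_sub_landenSin_sq hk0, sqrt_div' _ (sq_nonneg _), sqrt_sq hpos.le,
      sqrt_mul' _ (one_sub_sq_mul_sin_sq_pos hk0 hk1 θ).le, sqrt_sq hcos.le]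
  refine ((hasDerivAt_arcsin hu.1.ne' hu.2.ne).comp θ
    (hasDerivAt_landenSin hk0 θ)).congr_deriv ?_
  rw [hsqrt]
  field_simp

theorem ellipticK_landen (hk0 : 0 ≤ k) (hk1 : k < 1) :
    ellipticK (4 * k / (1 + k) ^ 2) = (1 + k) * ellipticK (k ^ 2) := by
  have hk : 0 < 1 + k := by positivity
  have hpos (θ : ℝ) : 0 < 1 + k * sin θ ^ 2 := by positivity
  have hneg (θ : ℝ) : 0 < 1 - k * sin θ ^ 2 := by nlinarith [sin_sq_le_one θ]
  have hroot (θ : ℝ) := sqrt_pos.2 (one_sub_sq_mul_sin_sq_pos hk0 hk1 θ)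
  have hcont : Continuous (landenSin k) :=
    .div (by fun_prop) (by fun_prop) fun θ ↦ (hpos θ).ne'
  have hchange := intervalIntegral.integral_comp_mul_deriv_of_deriv_nonneg (a := 0) (b := π / 2)
    (g := fun φ ↦ (√(1 - 4 * k / (1 + k) ^ 2 * sin φ ^ 2))⁻¹)
    (continuous_arcsin.comp hcont).continuousOn
    (fun θ hθ ↦ by
      rw [min_eq_left pi_div_two_pos.le, max_eq_right pi_div_two_pos.le] at hθ
      exact hasDerivAt_arcsin_landenSin hk0 hk1
        (cos_pos_of_mem_Ioo ⟨by linarith [hθ.1, pi_pos], hθ.2⟩))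
    (fun θ _ ↦ by have := hneg θ; have := hpos θ; have := hroot θ; positivity)
  have hstart : landenSin k 0 = 0 := by simp [landenSin]
  have hend : landenSin k (π / 2) = 1 := by simp [landenSin, hk.ne']
  simp only [Function.comp_apply, hstart, hend, arcsin_zero, arcsin_one] at hchange
  rw [ellipticK, ← hchange, ellipticK, ← intervalIntegral.integral_const_mul]
  refine intervalIntegral.integral_congr fun θ _ ↦ ?_
  have hu := (sq_le_one_iff_abs_le_one _).1 (landenSin_sq_le_one hk0 hk1 θ)
  rw [sin_arcsin' (abs_le.1 hu), one_sub_mul_landenSin_sq hk0,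
    sqrt_sq (div_nonneg (hneg θ).le (hpos θ).le)]
  have := (hneg θ).ne'; have := (hpos θ).ne'; have := (hroot θ).ne'
  field_simp

end Landen

theorem singular_modulus_two (α : ℝ) (h0 : 0 < α) (h1 : α < 1)
    (h : F (1 - α) = Real.sqrt 2 * F α) :
    α = (Real.sqrt 2 - 1) ^ 2 := by
  set k := √2 - 1 with hk
  have hsq : √2 ^ 2 = 2 := sq_sqrt zero_le_two
  have h1k : 1 + k = √2 := by rw [hk]; ring
  have hkk : k ^ 2 + 2 * k = 1 := by rw [hk]; linear_combination hsq
  have hk0 : 0 < k := by linarith [one_lt_sqrt_two]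
  have hk2 : k ^ 2 < 1 := by nlinarith
  have hmodulus : 4 * k / (1 + k) ^ 2 = 1 - k ^ 2 := by
    rw [h1k, hsq]
    linear_combination hkk
  have hF : F (1 - k ^ 2) = √2 * F (k ^ 2) := by
    have hlanden := ellipticK_landen hk0.le (by nlinarith)
    rw [hmodulus, h1k, ellipticK_eq_pi_div_two_mul_F (by linarith) (by nlinarith),
      ellipticK_eq_pi_div_two_mul_F (by positivity) hk2] at hlanden
    refine mul_left_cancel₀ (by positivity : π / 2 ≠ 0) ?_
    rw [hlanden]
    ring
  refine (strictAntiOn_F_one_sub_sub_mul_F (sqrt_nonneg 2)).injOn ⟨h0, h1⟩ ⟨by positivity, hk2⟩ ?_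
  simp only [h, hF, sub_self]
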